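/- Let G=(V,E) be a locally finite graph with symmetric positive edge weights and measure μ:V→(0,∞), and let h satisfy (H1). Let f̃:V×ℝ→ℝ satisfy f̃(x,s) ≥ 0 for all (x,s) and f̃(x,s) = 0 for all s ≤ 0. If u ∈ ℋ is a weak solution of −Δu + hu = f̃(x,u), then u(x) ≥ 0 for all x ∈ V; if in addition G is connected and u ≢ 0, then u(x) > 0 for all x ∈ V. -/

import Mathlib

open Filter Topology

namespace GraphNLE

variable {V : Type*}

/-- Integral of `g` over `V` w.r.t. the measure `μ`: `∫_V g dμ = Σ_x μ(x) g(x)`. -/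
noncomputable def intV (μ g : V → ℝ) : ℝ := ∑' x, μ x * g x

/-- The graph (μ-)Laplacian: `Δu(x) = (1/μ(x)) Σ_{y} w_{xy} (u(y)-u(x))`. -/
noncomputable def lap (w : V → V → ℝ) (μ u : V → ℝ) (x : V) : ℝ :=
  (1 / μ x) * ∑' y, w x y * (u y - u x)

/-- Squared length of the gradient: `|∇u|²(x) = (1/(2μ(x))) Σ_y w_{xy} (u(y)-u(x))²`. -/
noncomputable def gradSq (w : V → V → ℝ) (μ u : V → ℝ) (x : V) : ℝ :=
  (1 / (2 * μ x)) * ∑' y, w x y * (u y - u x) ^ 2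

/-- The gradient form `Γ(u,v)(x) = (1/(2μ(x))) Σ_y w_{xy} (u(y)-u(x))(v(y)-v(x))`. -/
noncomputable def gamma (w : V → V → ℝ) (μ u v : V → ℝ) (x : V) : ℝ :=
  (1 / (2 * μ x)) * ∑' y, w x y * (u y - u x) * (v y - v x)

/-- Membership in `W^{1,2}(V)`: finite `∫(|∇u|² + u²) dμ`. -/
def memW (w : V → V → ℝ) (μ u : V → ℝ) : Prop :=
  Summable (fun x => μ x * gradSq w μ u x) ∧ Summable (fun x => μ x * u x ^ 2)

/-- The `W^{1,2}` norm `(∫_V (|∇u|² + u²) dμ)^{1/2}`. -/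
noncomputable def normW (w : V → V → ℝ) (μ u : V → ℝ) : ℝ :=
  Real.sqrt (intV μ fun x => gradSq w μ u x + u x ^ 2)

/-- Membership in the space `ℋ`: finite `∫(|∇u|² + h u²) dμ`. -/
def memH (w : V → V → ℝ) (μ h u : V → ℝ) : Prop :=
  Summable (fun x => μ x * gradSq w μ u x) ∧ Summable (fun x => μ x * (h x * u x ^ 2))

/-- The norm of `ℋ`: `‖u‖_ℋ = (∫_V (|∇u|² + h u²) dμ)^{1/2}`. -/
noncomputable def normH (w : V → V → ℝ) (μ h u : V → ℝ) : ℝ :=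
  Real.sqrt (intV μ fun x => gradSq w μ u x + h x * u x ^ 2)

/-- The inner product of `ℋ`: `⟨u,v⟩_ℋ = ∫_V (Γ(u,v) + h u v) dμ`. -/
noncomputable def innerH (w : V → V → ℝ) (μ h u v : V → ℝ) : ℝ :=
  intV μ fun x => gamma w μ u v x + h x * u x * v x

/-- `λ₁ = inf { ∫(|∇u|² + h u²) dμ : u ∈ ℋ, ∫ u² dμ = 1 }`. -/
noncomputable def lambda1 (w : V → V → ℝ) (μ h : V → ℝ) : ℝ :=
  sInf {t : ℝ | ∃ u : V → ℝ, memH w μ h u ∧ intV μ (fun x => u x ^ 2) = 1 ∧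
    intV μ (fun x => gradSq w μ u x + h x * u x ^ 2) = t}

/-- The primitive `F(x,s) = ∫_0^s f(x,t) dt`. -/
noncomputable def Fint (f : V → ℝ → ℝ) (x : V) (s : ℝ) : ℝ := ∫ t in (0:ℝ)..s, f x t

/-- The functional `J(u) = (1/2)∫(|∇u|² + h u²) dμ − ∫ F(x,u) dμ`. -/
noncomputable def energy (w : V → V → ℝ) (μ h : V → ℝ) (f : V → ℝ → ℝ) (u : V → ℝ) : ℝ :=
  (1 / 2) * intV μ (fun x => gradSq w μ u x + h x * u x ^ 2) -
    intV μ (fun x => Fint f x (u x))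

/-- The perturbed functional `J_ε(u) = J(u) − ε ∫ g u dμ`. -/
noncomputable def energyP (w : V → V → ℝ) (μ h : V → ℝ) (f : V → ℝ → ℝ) (g : V → ℝ)
    (ε : ℝ) (u : V → ℝ) : ℝ :=
  energy w μ h f u - ε * intV μ (fun x => g x * u x)

/-- Weak convergence `u_k ⇀ u` in the Hilbert space `ℋ`. -/
def weakConvH (w : V → V → ℝ) (μ h : V → ℝ) (uk : ℕ → V → ℝ) (u : V → ℝ) : Prop :=
  ∀ v : V → ℝ, memH w μ h v →
    Tendsto (fun k => innerH w μ h (uk k) v) atTop (nhds (innerH w μ h u v))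

/-- The `L^q(V,μ)` norm for finite `q`. -/
noncomputable def LqNorm (μ : V → ℝ) (q : ℝ) (u : V → ℝ) : ℝ :=
  (intV μ fun x => |u x| ^ q) ^ (1 / q)

/-- The `L^∞(V)` norm `sup_x |u(x)|`. -/
noncomputable def LinfNorm (u : V → ℝ) : ℝ := ⨆ x, |u x|

/-- `g` (viewed via the pairing `u ↦ ∫ g u dμ`) belongs to the dual `ℋ'` of `ℋ`. -/
def memHdual (w : V → V → ℝ) (μ h g : V → ℝ) : Prop :=
  ∃ C : ℝ, ∀ u : V → ℝ, memH w μ h u →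
    Summable (fun x => μ x * (g x * u x)) ∧
    |intV μ fun x => g x * u x| ≤ C * normH w μ h u

/-- `u ∈ ℋ` is a weak solution of `−Δu + hu = f(x,u)`. -/
def weakSol (w : V → V → ℝ) (μ h : V → ℝ) (f : V → ℝ → ℝ) (u : V → ℝ) : Prop :=
  memH w μ h u ∧ ∀ φ : V → ℝ, memH w μ h φ →
    intV μ (fun x => gamma w μ u φ x + h x * u x * φ x) =
      intV μ (fun x => f x (u x) * φ x)

/-- `u ∈ ℋ` is a weak solution of the perturbed equation `−Δu + hu = f(x,u) + εg`. -/
def weakSolP (w : V → V → ℝ) (μ h : V → ℝ) (f : V → ℝ → ℝ) (g : V → ℝ) (ε : ℝ)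
    (u : V → ℝ) : Prop :=
  memH w μ h u ∧ ∀ φ : V → ℝ, memH w μ h φ →
    intV μ (fun x => gamma w μ u φ x + h x * u x * φ x) =
      intV μ (fun x => f x (u x) * φ x) + ε * intV μ (fun x => g x * φ x)

/-- The simple graph underlying the weights `w` (edges where the weight is nonzero). -/
def adjGraph (w : V → V → ℝ) : SimpleGraph V where
  Adj x y := x ≠ y ∧ (w x y ≠ 0 ∨ w y x ≠ 0)
  symm := ⟨fun x y hxy => ⟨hxy.1.symm, hxy.2.symm⟩⟩
  loopless := ⟨fun x hx => hx.1 rfl⟩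

/-!
Testing the equation with `u₋ = min u 0`, which lies in `ℋ` because `t ↦ min t 0` is a
normal contraction, gives `∫ (Γ(u, u₋) + h u u₋) dμ = ∫ f(x, u) u₋ dμ ≤ 0`; both terms on the
left are pointwise nonnegative (monotonicity of `t ↦ min t 0`) and `h u u₋ = h u₋² > 0` wherever
`u < 0`, so `u₋ = 0`.

Testing with the indicator of a vertex `x` shows that the equation holds pointwise. At a
zero `x` of `u ≥ 0` it reads `Σ_y w_{xy} u(y) = μ(x) Δu(x) = -μ(x) f(x, 0) ≤ 0`, so `u`
vanishes at every neighbour of `x`; on a connected graph the zero set is therefore empty or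
all of `V`.
-/

lemma mul_sub_nonneg_of_monotone {φ : ℝ → ℝ} (hφ : Monotone φ) (a b : ℝ) :
    0 ≤ (b - a) * (φ b - φ a) := by
  rcases le_total a b with hab | hab
  · exact mul_nonneg (sub_nonneg.2 hab) (sub_nonneg.2 (hφ hab))
  · exact mul_nonneg_of_nonpos_of_nonpos (sub_nonpos.2 hab) (sub_nonpos.2 (hφ hab))

lemma abs_sub_le_of_lipschitzWith_one {φ : ℝ → ℝ} (hφ : LipschitzWith 1 φ) (a b : ℝ) :
    |φ b - φ a| ≤ |b - a| := by
  simpa [Real.dist_eq] using hφ.dist_le_mul b a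

lemma sq_sub_le_sq_of_lipschitzWith_one {φ : ℝ → ℝ} (hφ : LipschitzWith 1 φ) (a b : ℝ) :
    (φ b - φ a) ^ 2 ≤ (b - a) ^ 2 :=
  sq_le_sq.2 (abs_sub_le_of_lipschitzWith_one hφ a b)

lemma mul_sub_le_sq_of_lipschitzWith_one {φ : ℝ → ℝ} (hφ : LipschitzWith 1 φ) (a b : ℝ) :
    (b - a) * (φ b - φ a) ≤ (b - a) ^ 2 :=
  calc (b - a) * (φ b - φ a) ≤ |b - a| * |φ b - φ a| := by
        rw [← abs_mul]; exact le_abs_self _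
    _ ≤ |b - a| * |b - a| :=
        mul_le_mul_of_nonneg_left (abs_sub_le_of_lipschitzWith_one hφ a b) (abs_nonneg _)
    _ = (b - a) ^ 2 := by rw [← sq, sq_abs]

lemma eq_zero_of_tsum_nonpos {ι : Type*} {g : ι → ℝ} (hg : Summable g) (hg0 : ∀ i, 0 ≤ g i)
    (hsum : ∑' i, g i ≤ 0) (i : ι) : g i = 0 :=
  (hg0 i).antisymm' (not_lt.1 fun hi => (hg.tsum_pos hg0 i hi).not_ge hsum)

lemma _root_.SimpleGraph.Preconnected.forall_of_adj {G : SimpleGraph V} (hG : G.Preconnected)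
    {P : V → Prop} (hP : ∀ x y, G.Adj x y → P x → P y) {x : V} (hx : P x) (y : V) : P y := by
  induction (SimpleGraph.reachable_iff_reflTransGen x y).1 (hG x y) with
  | refl => exact hx
  | tail _ hadj ih => exact hP _ _ hadj ih

section

variable {w : V → V → ℝ} {μ : V → ℝ}

lemma summable_mul_of_finite {x : V} (hx : {y | w x y ≠ 0}.Finite) (g : V → ℝ) :
    Summable fun y => w x y * g y :=
  summable_of_hasFiniteSupport (hx.subset (Function.support_mul_subset_left _ _))

lemma gamma_self (u : V → ℝ) (x : V) : gamma w μ u u x = gradSq w μ u x := by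
  simp only [gamma, gradSq, sq, mul_assoc]

lemma gamma_nonneg {u v : V → ℝ} {x : V} (hw : ∀ y, 0 ≤ w x y) (hμ : 0 ≤ μ x)
    (huv : ∀ y, 0 ≤ (u y - u x) * (v y - v x)) : 0 ≤ gamma w μ u v x :=
  mul_nonneg (by positivity) <| tsum_nonneg fun y => by
    rw [mul_assoc]; exact mul_nonneg (hw y) (huv y)

lemma gamma_le_gamma {u v u' v' : V → ℝ} {x : V} (hw : ∀ y, 0 ≤ w x y)
    (hx : {y | w x y ≠ 0}.Finite) (hμ : 0 ≤ μ x)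
    (huv : ∀ y, (u y - u x) * (v y - v x) ≤ (u' y - u' x) * (v' y - v' x)) :
    gamma w μ u v x ≤ gamma w μ u' v' x := by
  simp only [gamma, mul_assoc]
  refine mul_le_mul_of_nonneg_left ?_ (by positivity)
  exact (summable_mul_of_finite hx _).tsum_le_tsum
    (fun y => mul_le_mul_of_nonneg_left (huv y) (hw y)) (summable_mul_of_finite hx _)

lemma gradSq_nonneg (hw : ∀ x y, 0 ≤ w x y) (hμ : ∀ x, 0 ≤ μ x) (u : V → ℝ) (x : V) :
    0 ≤ gradSq w μ u x :=
  gamma_self (μ := μ) u x ▸ gamma_nonneg (hw x) (hμ x) fun _ => mul_self_nonneg _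

lemma memH_comp_of_lipschitzWith_one {h u : V → ℝ} {φ : ℝ → ℝ} (hw : ∀ x y, 0 ≤ w x y)
    (hlf : ∀ x, {y | w x y ≠ 0}.Finite) (hμ : ∀ x, 0 ≤ μ x) (hh : ∀ x, 0 ≤ h x)
    (hφ : LipschitzWith 1 φ) (hφ0 : φ 0 = 0) (hu : memH w μ h u) : memH w μ h (φ ∘ u) := by
  have hgrad : ∀ x, gradSq w μ (φ ∘ u) x ≤ gradSq w μ u x := fun x => by
    rw [← gamma_self, ← gamma_self]
    exact gamma_le_gamma (hw x) (hlf x) (hμ x) fun y => by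
      simpa only [Function.comp, ← sq] using sq_sub_le_sq_of_lipschitzWith_one hφ (u x) (u y)
  have hsq : ∀ x, φ (u x) ^ 2 ≤ u x ^ 2 := fun x => by
    simpa [hφ0] using sq_sub_le_sq_of_lipschitzWith_one hφ 0 (u x)
  refine ⟨hu.1.of_nonneg_of_le (fun x => mul_nonneg (hμ x) (gradSq_nonneg hw hμ _ x))
    (fun x => mul_le_mul_of_nonneg_left (hgrad x) (hμ x)), hu.2.of_nonneg_of_le
    (fun x => mul_nonneg (hμ x) (mul_nonneg (hh x) (sq_nonneg _))) fun x => ?_⟩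
  exact mul_le_mul_of_nonneg_left (mul_le_mul_of_nonneg_left (hsq x) (hh x)) (hμ x)

theorem weakSol.nonneg {h u : V → ℝ} {f : V → ℝ → ℝ} (hw : ∀ x y, 0 ≤ w x y)
    (hlf : ∀ x, {y | w x y ≠ 0}.Finite) (hμ : ∀ x, 0 < μ x) (hh : ∀ x, 0 < h x)
    (hf : ∀ x s, 0 ≤ f x s) (hu : weakSol w μ h f u) (x : V) : 0 ≤ u x := by
  have hφ : LipschitzWith 1 fun t : ℝ => min t 0 := LipschitzWith.id.min_const 0
  have hφmono : Monotone fun t : ℝ => min t 0 := monotone_id.min monotone_const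
  have hm := memH_comp_of_lipschitzWith_one hw hlf (fun x => (hμ x).le)
    (fun x => (hh x).le) hφ (min_self 0) hu.1
  set m : V → ℝ := (fun t : ℝ => min t 0) ∘ u
  have hγ : ∀ x, 0 ≤ gamma w μ u m x ∧ gamma w μ u m x ≤ gradSq w μ u x := fun x => by
    refine ⟨gamma_nonneg (hw x) (hμ x).le fun y => mul_sub_nonneg_of_monotone hφmono _ _, ?_⟩
    rw [← gamma_self]
    exact gamma_le_gamma (hw x) (hlf x) (hμ x).le fun y => by
      simpa only [← sq, m, Function.comp_apply] using
        mul_sub_le_sq_of_lipschitzWith_one hφ (u x) (u y)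
  have hhum : ∀ x, 0 ≤ h x * u x * m x ∧ h x * u x * m x ≤ h x * u x ^ 2 := fun x => by
    simp only [mul_assoc]
    refine ⟨mul_nonneg (hh x).le ?_, mul_le_mul_of_nonneg_left ?_ (hh x).le⟩
    · simpa [m] using mul_sub_nonneg_of_monotone hφmono 0 (u x)
    · simpa [m] using mul_sub_le_sq_of_lipschitzWith_one hφ 0 (u x)
  set g : V → ℝ := fun x => μ x * (gamma w μ u m x + h x * u x * m x)
  have hg0 : ∀ x, 0 ≤ g x := fun x =>
    mul_nonneg (hμ x).le (add_nonneg (hγ x).1 (hhum x).1)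
  have hg : Summable g := (hu.1.1.add hu.1.2).of_nonneg_of_le hg0 fun x => by
    rw [← mul_add]
    exact mul_le_mul_of_nonneg_left (add_le_add (hγ x).2 (hhum x).2) (hμ x).le
  have hsum : ∑' x, g x ≤ 0 :=
    calc ∑' x, g x = ∑' x, μ x * (f x (u x) * m x) := hu.2 m hm
      _ ≤ 0 := tsum_nonpos fun x => mul_nonpos_of_nonneg_of_nonpos (hμ x).le
          (mul_nonpos_of_nonneg_of_nonpos (hf x _) (min_le_right _ _))
  by_contra! hneg
  have hpos : 0 < h x * u x * m x := by
    rw [show m x = u x from min_eq_left hneg.le]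
    exact mul_pos_of_neg_of_neg (mul_neg_of_pos_of_neg (hh x) hneg) hneg
  exact (mul_pos (hμ x) (add_pos_of_nonneg_of_pos (hγ x).1 hpos)).ne'
    (eq_zero_of_tsum_nonpos hg hg0 hsum x)

lemma mul_gamma_single [DecidableEq V] (hsymm : ∀ x y, w x y = w y x) {z : V} (hz : μ z ≠ 0)
    (u : V → ℝ) (x : V) :
    μ z * gamma w μ u (Pi.single x 1) z =
      (w x z * (u x - u z) - (Pi.single x (μ x * lap w μ u x) : V → ℝ) z) / 2 := by
  by_cases hzx : z = x
  · subst hzx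
    have hsum : ∑' y, w z y * (u y - u z) *
        ((Pi.single z 1 : V → ℝ) y - (Pi.single z 1 : V → ℝ) z) = -∑' y, w z y * (u y - u z) := by
      rw [← tsum_neg]
      refine tsum_congr fun y => ?_
      rcases eq_or_ne y z with rfl | hy
      · simp
      · simp [hy]
    rw [gamma, lap, hsum, Pi.single_eq_same, sub_self, mul_zero, zero_sub]
    field_simp
  · have hsum : ∑' y, w z y * (u y - u z) *
        ((Pi.single x 1 : V → ℝ) y - (Pi.single x 1 : V → ℝ) z) = w z x * (u x - u z) := by
      rw [tsum_eq_single x fun y hy => by simp [hy, hzx]]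
      simp [hzx]
    rw [gamma, hsum, Pi.single_eq_of_ne hzx, hsymm z x]
    field_simp
    ring

lemma hasSum_mul_gamma_single [DecidableEq V] (hsymm : ∀ x y, w x y = w y x)
    (hlf : ∀ x, {y | w x y ≠ 0}.Finite) (hμ : ∀ x, μ x ≠ 0) (u : V → ℝ) (x : V) :
    HasSum (fun z => μ z * gamma w μ u (Pi.single x 1) z) (-(μ x * lap w μ u x)) := by
  have hlap : HasSum (fun z => w x z * (u x - u z)) (-(μ x * lap w μ u x)) := by
    convert (summable_mul_of_finite (hlf x) fun z => u x - u z).hasSum using 1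
    rw [lap, ← mul_assoc, mul_one_div_cancel (hμ x), one_mul, ← tsum_neg]
    exact tsum_congr fun z => by ring
  rw [funext fun z => mul_gamma_single hsymm (hμ z) u x,
    show -(μ x * lap w μ u x) = (-(μ x * lap w μ u x) - μ x * lap w μ u x) / 2 by ring]
  exact (hlap.sub (hasSum_pi_single x _)).div_const 2

lemma memH_single [DecidableEq V] (hsymm : ∀ x y, w x y = w y x)
    (hlf : ∀ x, {y | w x y ≠ 0}.Finite) (hμ : ∀ x, μ x ≠ 0) (h : V → ℝ) (x : V) :
    memH w μ h (Pi.single x 1) := by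
  refine ⟨?_, summable_of_ne_finset_zero (s := {x}) fun z hz => ?_⟩
  · simpa only [gamma_self] using (hasSum_mul_gamma_single hsymm hlf hμ (Pi.single x 1) x).summable
  · simp [Pi.single_eq_of_ne (Finset.notMem_singleton.1 hz)]

theorem weakSol.neg_lap_add_mul_eq {h u : V → ℝ} {f : V → ℝ → ℝ}
    (hsymm : ∀ x y, w x y = w y x) (hlf : ∀ x, {y | w x y ≠ 0}.Finite) (hμ : ∀ x, μ x ≠ 0)
    (hu : weakSol w μ h f u) (x : V) : -lap w μ u x + h x * u x = f x (u x) := by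
  classical
  have hsingle : ∀ g : V → ℝ, HasSum (fun z => μ z * (g z * (Pi.single x 1 : V → ℝ) z))
      (μ x * g x) := fun g => by
    simpa using hasSum_single (f := fun z => μ z * (g z * (Pi.single x 1 : V → ℝ) z)) x
      fun z hz => by simp [hz]
  have hlhs : HasSum (fun z => μ z * (gamma w μ u (Pi.single x 1) z +
      h z * u z * (Pi.single x 1 : V → ℝ) z)) (μ x * (-lap w μ u x + h x * u x)) := by
    rw [show μ x * (-lap w μ u x + h x * u x) = -(μ x * lap w μ u x) + μ x * (h x * u x) by ring]
    simpa only [mul_add] using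
      (hasSum_mul_gamma_single hsymm hlf hμ u x).add (hsingle fun z => h z * u z)
  exact mul_left_cancel₀ (hμ x) <| hlhs.tsum_eq.symm.trans <|
    (hu.2 _ (memH_single hsymm hlf hμ h x)).trans (hsingle fun z => f z (u z)).tsum_eq

lemma eq_of_forall_le_of_lap_nonpos {u : V → ℝ} {x y : V} (hw : ∀ y, 0 ≤ w x y)
    (hx : {y | w x y ≠ 0}.Finite) (hμ : 0 < μ x) (hmin : ∀ y, u x ≤ u y)
    (hlap : lap w μ u x ≤ 0) (hxy : w x y ≠ 0) : u y = u x := by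
  have hsum : ∑' y, w x y * (u y - u x) ≤ 0 := by
    rw [lap, one_div_mul_eq_div] at hlap
    exact ((div_nonpos_iff.1 hlap).resolve_left fun h => hμ.not_ge h.2).1
  have hzero := eq_zero_of_tsum_nonpos (summable_mul_of_finite hx _)
    (fun y => mul_nonneg (hw y) (sub_nonneg.2 (hmin y))) hsum y
  exact sub_eq_zero.1 ((mul_eq_zero.1 hzero).resolve_left hxy)

end

theorem maximum_principle_for_nonnegative_nonlinearity_general
    (w : V → V → ℝ) (hsymm : ∀ x y, w x y = w y x) (hwnn : ∀ x y, 0 ≤ w x y)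
    (hlf : ∀ x : V, {y | w x y ≠ 0}.Finite)
    (μ : V → ℝ) (hμ : ∀ x, 0 < μ x)
    (h : V → ℝ) (h₀ : ℝ) (hh₀ : 0 < h₀) (hH1 : ∀ x, h₀ ≤ h x)
    (f : V → ℝ → ℝ) (hfnn : ∀ x, ∀ s : ℝ, 0 ≤ f x s)
    (u : V → ℝ) (hu : weakSol w μ h f u) :
    (∀ x, 0 ≤ u x) ∧
      ((adjGraph w).Connected → u ≠ 0 → ∀ x, 0 < u x) := by
  have hnn : ∀ x, 0 ≤ u x :=
    hu.nonneg hwnn hlf hμ (fun x => hh₀.trans_le (hH1 x)) hfnn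
  refine ⟨hnn, fun hconn hne x => (hnn x).lt_of_ne' fun hx => hne ?_⟩
  have hzero_adj : ∀ y z, (adjGraph w).Adj y z → u y = 0 → u z = 0 := by
    intro y z hyz hy
    have hlap : lap w μ u y ≤ 0 := by
      have := hu.neg_lap_add_mul_eq hsymm hlf (fun x => (hμ x).ne') y
      rw [hy, mul_zero, add_zero] at this
      linarith [hfnn y 0]
    have hwyz : w y z ≠ 0 := hyz.2.elim id (hsymm y z ▸ ·)
    rw [← hy]
    exact eq_of_forall_le_of_lap_nonpos (hwnn y) (hlf y) (hμ y) (fun z => hy ▸ hnn z) hlap hwyz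
  exact funext (hconn.preconnected.forall_of_adj hzero_adj hx)

theorem maximum_principle_for_nonnegative_nonlinearity
    (w : V → V → ℝ) (hsymm : ∀ x y, w x y = w y x) (hwnn : ∀ x y, 0 ≤ w x y)
    (hlf : ∀ x : V, {y | w x y ≠ 0}.Finite)
    (μ : V → ℝ) (hμ : ∀ x, 0 < μ x)
    (h : V → ℝ) (h₀ : ℝ) (hh₀ : 0 < h₀) (hH1 : ∀ x, h₀ ≤ h x)
    (f : V → ℝ → ℝ) (hfnn : ∀ x, ∀ s : ℝ, 0 ≤ f x s)
    (hfzero : ∀ x, ∀ s : ℝ, s ≤ 0 → f x s = 0)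
    (u : V → ℝ) (hu : weakSol w μ h f u) :
    (∀ x, 0 ≤ u x) ∧
      ((adjGraph w).Connected → u ≠ 0 → ∀ x, 0 < u x) :=
  maximum_principle_for_nonnegative_nonlinearity_general w hsymm hwnn hlf μ hμ h h₀ hh₀ hH1 f hfnn u
    hu

end GraphNLE
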